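/- Multi-block factorization of value functions (discrete case): let 0 = t_0 < t_1 < ... < t_N = T, suppose for each i a state reduction (θ_{t_i}, θ_{t_{i+1}}, f_{t_i:t_{i+1}}) across [t_i, t_{i+1}] exists and is compatible with the one-step kernels, and suppose the criterion factors as j = j̃ ∘ θ_{t_N}. Define reduced value functions by Ṽ_{t_N} = j̃ and Ṽ_{t_i} = B̃_{t_{i+1}:t_i} Ṽ_{t_{i+1}}, where B̃_{t_{i+1}:t_i} is the reduced Bellman operator across the block. Then the original value functions satisfy V_{t_i} = Ṽ_{t_i} ∘ θ_{t_i} for every i = 0,...,N. -/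

import Mathlib

open scoped ENNReal

/-- History space `H_t = W_0 × ∏_{s=0}^{t-1}(U_s × W_{s+1})`. -/
def Hist (W U : ℕ → Type) : ℕ → Type :=
  fun t => Nat.rec (motive := fun _ => Type) (W 0) (fun s ih => ih × U s × W (s + 1)) t

/-- Transport of a history along an equality of time indices. -/
def hcast {W U : ℕ → Type} {a b : ℕ} (e : a = b) (h : Hist W U a) : Hist W U b := e ▸ h

/-- Noise sequences `w_{t+1:t+n}`. -/
def NoiseSeqE (W : ℕ → Type) (t : ℕ) : ℕ → Type :=
  fun n => Nat.rec (motive := fun _ => Type) PUnit (fun m ih => ih × W (t + m + 1)) n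

/-- The flow `Φ_{t,t+n}^γ` generated by a family of history feedbacks `γ`. -/
def flowE {W U : ℕ → Type} (γ : ∀ s, Hist W U s → U s) :
    ∀ (n t : ℕ), Hist W U t → NoiseSeqE W t n → Hist W U (t + n)
  | 0, _, h, _ => h
  | n + 1, t, h, ws =>
      (flowE γ n t h ws.1, γ (t + n) (flowE γ n t h ws.1), ws.2)

/-- The product `∏_{s=t+1}^{t+n} ρ_{s-1,s}(Φ_{t,s-1}^γ(h_t, w_{t+1:s-1}), {w_s})` of the
one-step kernels evaluated along the flow. -/
noncomputable def probE {W U : ℕ → Type} (ρ : ∀ s, Hist W U s → W (s + 1) → ℝ≥0∞)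
    (γ : ∀ s, Hist W U s → U s) :
    ∀ (n t : ℕ), Hist W U t → NoiseSeqE W t n → ℝ≥0∞
  | 0, _, _, _ => 1
  | n + 1, t, h, ws => probE ρ γ n t h ws.1 * ρ (t + n) (flowE γ n t h ws.1) ws.2

/-- The value function at time `t` (with `n = T - t` remaining steps): the infimum over
history feedbacks of the expected criterion
`Σ_{w_{t+1:T}} j(Φ_{t,T}^γ(h_t, w_{t+1:T})) ∏_{s=t+1}^{T} ρ_{s-1,s}(⋯, {w_s})`. -/
noncomputable def Val {W U : ℕ → Type} (ρ : ∀ s, Hist W U s → W (s + 1) → ℝ≥0∞)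
    (T : ℕ) (j : Hist W U T → ℝ≥0∞) (n t : ℕ) (e : t + n = T) (h : Hist W U t) : ℝ≥0∞ :=
  ⨅ γ : ∀ s, Hist W U s → U s, ∑' ws : NoiseSeqE W t n,
    j (hcast e (flowE γ n t h ws)) * probE ρ γ n t h ws

/-- Partial history space `H_{t+1:t+n} = ∏_{m=0}^{n-1}(U_{t+m} × W_{t+m+1})`. -/
def PartHistE (W U : ℕ → Type) (t : ℕ) : ℕ → Type :=
  fun n => Nat.rec (motive := fun _ => Type) PUnit (fun m ih => ih × U (t + m) × W (t + m + 1)) n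

/-- Splitting a history `h_{t+n}` as `(h_t, h_{t+1:t+n})`. -/
def splitE {W U : ℕ → Type} : ∀ (n t : ℕ), Hist W U (t + n) → Hist W U t × PartHistE W U t n
  | 0, _, h => (h, PUnit.unit)
  | n + 1, t, h => ((splitE n t h.1).1, ((splitE n t h.1).2, h.2.1, h.2.2))

/-- The composed Bellman operator `B_{t+n:t} = B_{t+1:t} ∘ ⋯ ∘ B_{t+n:t+n-1}` across a
time block, with one-step operators
`(B_{s+1:s} φ)(h_s) = inf_{u_s} Σ_{w_{s+1}} φ(h_s,u_s,w_{s+1}) ρ_{s,s+1}(h_s,{w_{s+1}})`. -/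
noncomputable def hBell {W U : ℕ → Type} (ρ : ∀ s, Hist W U s → W (s + 1) → ℝ≥0∞) :
    ∀ (n t : ℕ), (Hist W U (t + n) → ℝ≥0∞) → Hist W U t → ℝ≥0∞
  | 0, _, φ, h => φ h
  | n + 1, t, φ, h =>
      ⨅ u : U t, ∑' w : W (t + 1),
        hBell ρ n (t + 1) (fun h' => φ (hcast (by omega) h')) (h, u, w) * ρ t h w

/-!
Within a block `[t_i, t_{i+1}]` the kernels and the reduced state `θ_{t_{i+1}}` see `h_{t_i}` only
through `θ_{t_i}(h_{t_i})`, so the composed Bellman operator of the block, applied to a function of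
`θ_{t_{i+1}}`, is constant on the fibres of `θ_{t_i}` and descends to an operator `B̃` on `X_i`.
Dynamic programming writes `V_{t_i}` as the block operator applied to `V_{t_{i+1}}`; backward
induction over the blocks, starting from `j = j̃ ∘ θ_{t_N}`, then gives
`V_{t_i} = Ṽ_{t_i} ∘ θ_{t_i}`.
-/

section Histories

variable {W U : ℕ → Type}

theorem hcast_hcast {a b c : ℕ} (e₁ : a = b) (e₂ : b = c) (h : Hist W U a) :
    hcast e₂ (hcast e₁ h) = hcast (e₁.trans e₂) h := by
  subst e₁ e₂; rfl

theorem hcast_rfl {a : ℕ} (e : a = a) (h : Hist W U a) : hcast e h = h := rfl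

def glueE : ∀ (n t : ℕ), Hist W U t → PartHistE W U t n → Hist W U (t + n)
  | 0, _, h, _ => h
  | n + 1, t, h, p => (glueE n t h p.1, p.2.1, p.2.2)

theorem splitE_glueE : ∀ (n t : ℕ) (h : Hist W U t) (p : PartHistE W U t n),
    splitE n t (glueE n t h p) = (h, p)
  | 0, _, _, _ => rfl
  | n + 1, t, h, p => by
    change ((splitE n t (glueE n t h p.1)).1, ((splitE n t (glueE n t h p.1)).2, p.2)) = (h, p)
    rw [splitE_glueE n t h p.1]
    rfl

end Histories

section Bellman

variable {W U : ℕ → Type} (ρ : ∀ s, Hist W U s → W (s + 1) → ℝ≥0∞)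

/-- The one-step Bellman operator `B_{s+1:s}`. -/
noncomputable def bellStep (s : ℕ) (φ : Hist W U (s + 1) → ℝ≥0∞) (h : Hist W U s) : ℝ≥0∞ :=
  ⨅ u : U s, ∑' w : W (s + 1), φ (h, u, w) * ρ s h w

theorem bellStep_hcast {a b : ℕ} (e : a = b) (φ : Hist W U (b + 1) → ℝ≥0∞) (h : Hist W U a) :
    bellStep ρ a (fun h' => φ (hcast (congrArg (· + 1) e) h')) h = bellStep ρ b φ (hcast e h) := by
  subst e; rfl

theorem hBell_succ : ∀ (n t : ℕ) (φ : Hist W U (t + (n + 1)) → ℝ≥0∞) (h : Hist W U t),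
    hBell ρ (n + 1) t φ h = hBell ρ n t (bellStep ρ (t + n) φ) h
  | 0, _, _, _ => rfl
  | n + 1, t, φ, h => by
    change bellStep ρ t (hBell ρ (n + 1) (t + 1) (fun h' => φ (hcast (by omega) h'))) h
      = bellStep ρ t
          (hBell ρ n (t + 1) (fun h' => bellStep ρ (t + (n + 1)) φ (hcast (by omega) h'))) h
    refine congrArg (bellStep ρ t · h) (funext fun h' => ?_)
    rw [hBell_succ n (t + 1)]
    exact congrArg (hBell ρ n (t + 1) · h')
      (funext (bellStep_hcast ρ (show t + 1 + n = t + (n + 1) by omega) φ))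

theorem hBell_add (n : ℕ) : ∀ (m t : ℕ) (φ : Hist W U (t + (n + m)) → ℝ≥0∞) (h : Hist W U t),
    hBell ρ (n + m) t φ h
      = hBell ρ n t (fun h' => hBell ρ m (t + n) (fun h'' => φ (hcast (by omega) h'')) h') h
  | 0, _, _, _ => rfl
  | m + 1, t, φ, h => by
    refine (hBell_succ ρ (n + m) t φ h).trans ?_
    rw [hBell_add n m]
    refine congrArg (hBell ρ n t · h) (funext fun h' => ?_)
    rw [hBell_succ]
    exact congrArg (hBell ρ m (t + n) · h')
      (funext (bellStep_hcast ρ (show t + n + m = t + (n + m) by omega) φ)).symm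

theorem hBell_eq_of_glueE : ∀ (n t : ℕ) (Φ : Hist W U (t + n) → ℝ≥0∞) (h h' : Hist W U t),
    (∀ m < n, ∀ (p : PartHistE W U t m) (w : W (t + m + 1)),
      ρ (t + m) (glueE m t h p) w = ρ (t + m) (glueE m t h' p) w) →
    (∀ p : PartHistE W U t n, Φ (glueE n t h p) = Φ (glueE n t h' p)) →
    hBell ρ n t Φ h = hBell ρ n t Φ h'
  | 0, _, _, _, _, _, hΦ => hΦ PUnit.unit
  | n + 1, t, Φ, h, h', hρ, hΦ => by
    rw [hBell_succ, hBell_succ]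
    refine hBell_eq_of_glueE n t _ h h' (fun m hm => hρ m (by omega)) fun p => ?_
    unfold bellStep
    simp only [hρ n (Nat.lt_succ_self n) p]
    exact iInf_congr fun u => tsum_congr fun w => congrArg (· * _) (hΦ (p, u, w))

theorem hBell_factorsThrough {X Y : Type} {n t : ℕ} (θ : Hist W U t → X)
    (θ' : Hist W U (t + n) → Y) (f : X → PartHistE W U t n → Y)
    (hred : ∀ h, θ' h = f (θ (splitE n t h).1) (splitE n t h).2)
    (ρt : ∀ m, X → PartHistE W U t m → W (t + m + 1) → ℝ≥0∞)
    (hcomp : ∀ m < n, ∀ (h : Hist W U (t + m)) (w : W (t + m + 1)),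
      ρ (t + m) h w = ρt m (θ (splitE m t h).1) (splitE m t h).2 w)
    (φ : Y → ℝ≥0∞) :
    (hBell ρ n t (fun h' => φ (θ' h'))).FactorsThrough θ := by
  intro h h' hθ
  refine hBell_eq_of_glueE ρ n t _ h h' (fun m hm p w => ?_) fun p => ?_
  · rw [hcomp m hm, hcomp m hm, splitE_glueE, splitE_glueE, hθ]
  · rw [hred, hred, splitE_glueE, splitE_glueE, hθ]

/-- The reduced block operator `B̃`, extended by `0` off the range of `θ`. -/
noncomputable def reducedBell {X Y : Type} {n t : ℕ} (θ : Hist W U t → X)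
    (θ' : Hist W U (t + n) → Y) (φ : Y → ℝ≥0∞) : X → ℝ≥0∞ :=
  Function.extend θ (hBell ρ n t fun h' => φ (θ' h')) 0

theorem reducedBell_apply {X Y : Type} {n t : ℕ} (θ : Hist W U t → X)
    (θ' : Hist W U (t + n) → Y) (f : X → PartHistE W U t n → Y)
    (hred : ∀ h, θ' h = f (θ (splitE n t h).1) (splitE n t h).2)
    (ρt : ∀ m, X → PartHistE W U t m → W (t + m + 1) → ℝ≥0∞)
    (hcomp : ∀ m < n, ∀ (h : Hist W U (t + m)) (w : W (t + m + 1)),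
      ρ (t + m) h w = ρt m (θ (splitE m t h).1) (splitE m t h).2 w)
    (φ : Y → ℝ≥0∞) (h : Hist W U t) :
    reducedBell ρ θ θ' φ (θ h) = hBell ρ n t (fun h' => φ (θ' h')) h :=
  (hBell_factorsThrough ρ θ θ' f hred ρt hcomp φ).extend_apply 0 h

end Bellman

section DynamicProgramming

variable {W U : ℕ → Type} (ρ : ∀ s, Hist W U s → W (s + 1) → ℝ≥0∞) {T : ℕ}
  (j : Hist W U T → ℝ≥0∞)

theorem tsum_noiseSeqE_succ {t n : ℕ} (F : NoiseSeqE W t (n + 1) → ℝ≥0∞) :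
    ∑' ws : NoiseSeqE W t (n + 1), F ws
      = ∑' (ws : NoiseSeqE W t n) (w : W (t + n + 1)), F (ws, w) :=
  ENNReal.tsum_prod'

theorem flowE_congr {γ γ' : ∀ s, Hist W U s → U s} {n t : ℕ}
    (hγ : ∀ m < n, γ (t + m) = γ' (t + m)) (h : Hist W U t) (ws : NoiseSeqE W t n) :
    flowE γ n t h ws = flowE γ' n t h ws := by
  induction n with
  | zero => rfl
  | succ n ih =>
    change (flowE γ n t h ws.1, γ (t + n) (flowE γ n t h ws.1), ws.2)
      = (flowE γ' n t h ws.1, γ' (t + n) (flowE γ' n t h ws.1), ws.2)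
    rw [ih (fun m hm => hγ m (by omega)) ws.1, hγ n (by omega)]

theorem probE_congr {γ γ' : ∀ s, Hist W U s → U s} {n t : ℕ}
    (hγ : ∀ m < n, γ (t + m) = γ' (t + m)) (h : Hist W U t) (ws : NoiseSeqE W t n) :
    probE ρ γ n t h ws = probE ρ γ' n t h ws := by
  induction n with
  | zero => rfl
  | succ n ih =>
    change probE ρ γ n t h ws.1 * ρ (t + n) (flowE γ n t h ws.1) ws.2
      = probE ρ γ' n t h ws.1 * ρ (t + n) (flowE γ' n t h ws.1) ws.2
    rw [ih (fun m hm => hγ m (by omega)) ws.1, flowE_congr (fun m hm => hγ m (by omega)) h ws.1]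

theorem expectedCost_succ (γ : ∀ s, Hist W U s → U s) {n t : ℕ}
    (φ : Hist W U (t + (n + 1)) → ℝ≥0∞) (h : Hist W U t) :
    ∑' ws : NoiseSeqE W t (n + 1), φ (flowE γ (n + 1) t h ws) * probE ρ γ (n + 1) t h ws
      = ∑' ws : NoiseSeqE W t n,
          (∑' w : W (t + n + 1), φ (flowE γ n t h ws, γ (t + n) (flowE γ n t h ws), w)
            * ρ (t + n) (flowE γ n t h ws) w) * probE ρ γ n t h ws := by
  rw [tsum_noiseSeqE_succ]
  refine tsum_congr fun ws => ?_
  rw [← ENNReal.tsum_mul_right]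
  exact tsum_congr fun w => (mul_left_comm _ _ _).trans (mul_comm _ _)

theorem Val_congr {n n' t t' : ℕ} (hn : n = n') (ht : t = t') (e : t + n = T) (h : Hist W U t) :
    Val ρ T j n t e h = Val ρ T j n' t' (by omega) (hcast ht h) := by
  subst hn ht; rfl

variable [∀ s, Nonempty (U s)]

theorem Val_zero {t : ℕ} (e : t + 0 = T) (h : Hist W U t) : Val ρ T j 0 t e h = j (hcast e h) := by
  have : Unique (NoiseSeqE W t 0) := inferInstanceAs (Unique PUnit)
  simp only [Val, (hasSum_unique _).tsum_eq]
  exact iInf_const.trans (mul_one (j (hcast e h)))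

variable [∀ s, Finite (U s)]

/-- One step of dynamic programming: optimising the last control separately costs nothing, since
a minimiser of `bellStep` can be chosen as a function of the history. -/
theorem Val_succ {n t : ℕ} (φ : Hist W U (t + (n + 1)) → ℝ≥0∞) (h : Hist W U t) :
    Val ρ (t + (n + 1)) φ (n + 1) t rfl h = Val ρ (t + n) (bellStep ρ (t + n) φ) n t rfl h := by
  simp only [Val, hcast_rfl, expectedCost_succ]
  refine le_antisymm (le_iInf fun γ => ?_) (le_iInf fun γ => (iInf_le _ γ).trans ?_)
  · choose u hu using fun h' : Hist W U (t + n) => exists_eq_ciInf_of_finite (ι := U (t + n))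
      (f := fun u => ∑' w : W (t + n + 1), φ (h', u, w) * ρ (t + n) h' w)
    have hγ : ∀ m < n, Function.update γ (t + n) u (t + m) = γ (t + m) := fun m hm =>
      Function.update_of_ne (by omega) _ _
    refine (iInf_le _ (Function.update γ (t + n) u)).trans_eq (tsum_congr fun ws => ?_)
    rw [flowE_congr hγ, probE_congr ρ hγ, Function.update_self]
    exact congrArg (· * _) (hu _)
  · exact ENNReal.tsum_le_tsum fun ws => mul_le_mul_left (iInf_le _ _) _

theorem Val_eq_hBell {n t : ℕ} (e : t + n = T) (h : Hist W U t) :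
    Val ρ T j n t e h = hBell ρ n t (fun h' => j (hcast e h')) h := by
  induction n generalizing t T with
  | zero => exact Val_zero ρ j e h
  | succ n ih =>
    subst e
    rw [Val_succ, ih, hBell_succ]
    rfl

theorem Val_add {n m t : ℕ} (e : t + (n + m) = T) (h : Hist W U t) :
    Val ρ T j (n + m) t e h = hBell ρ n t (fun h' => Val ρ T j m (t + n) (by omega) h') h := by
  simp only [Val_eq_hBell, hBell_add, hcast_hcast]

theorem Val_eq_hBell_Val {t t' : ℕ} (htt' : t ≤ t') (ht'T : t' ≤ T) (e : t + (T - t) = T)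
    (h : Hist W U t) :
    Val ρ T j (T - t) t e h = hBell ρ (t' - t) t
      (fun h' => Val ρ T j (T - t') t' (Nat.add_sub_cancel' ht'T)
        (hcast (Nat.add_sub_cancel' htt') h')) h := by
  rw [Val_congr ρ j (show T - t = (t' - t) + (T - t') by omega) rfl, hcast_rfl, Val_add]
  simp only [Val_congr ρ j rfl (Nat.add_sub_cancel' htt')]

end DynamicProgramming

/-- Backward recursion from `v` at time `N`; `default` after `N`. -/
def backwardRec {Y : ℕ → Type*} [∀ i, Inhabited (Y i)] (N : ℕ) (B : ∀ i, Y (i + 1) → Y i)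
    (v : Y N) (i : ℕ) : Y i :=
  if hi : i ≤ N then Nat.decreasingInduction (motive := fun m _ => Y m) (fun k _ => B k) v hi
  else default

section BackwardRec

variable {Y : ℕ → Type*} [∀ i, Inhabited (Y i)] (N : ℕ) (B : ∀ i, Y (i + 1) → Y i) (v : Y N)

theorem backwardRec_self : backwardRec N B v N = v := by
  simp only [backwardRec, dif_pos le_rfl, Nat.decreasingInduction_self]

theorem backwardRec_of_lt {i : ℕ} (hi : i < N) :
    backwardRec N B v i = B i (backwardRec N B v (i + 1)) := by
  simp only [backwardRec, dif_pos hi.le, dif_pos (Nat.succ_le_of_lt hi)]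
  exact Nat.decreasingInduction_succ_left _ _ hi _

end BackwardRec

theorem multi_block_factorization_general {W U : ℕ → Type}
    [∀ s, Fintype (U s)] [∀ s, Nonempty (U s)]
    (T N : ℕ)
    (ρ : ∀ s, Hist W U s → W (s + 1) → ℝ≥0∞)
    (t : ℕ → ℕ) (htN : t N = T)
    (hmono : ∀ i, i < N → t i < t (i + 1))
    (hle : ∀ i, i ≤ N → t i ≤ T)
    (X : ℕ → Type)
    (θ : ∀ i, Hist W U (t i) → X i)
    (f : ∀ i, X i → PartHistE W U (t i) (t (i + 1) - t i) → X (i + 1))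
    (hred : ∀ i (hi : i < N) (h : Hist W U (t i + (t (i + 1) - t i))),
      θ (i + 1) (hcast (Nat.add_sub_cancel' (Nat.le_of_lt (hmono i hi))) h)
        = f i (θ i (splitE (t (i + 1) - t i) (t i) h).1) (splitE (t (i + 1) - t i) (t i) h).2)
    (ρt : ∀ i m, X i → PartHistE W U (t i) m → W (t i + m + 1) → ℝ≥0∞)
    (hcomp : ∀ i, i < N → ∀ m, m < t (i + 1) - t i →
      ∀ (h : Hist W U (t i + m)) (w : W (t i + m + 1)),
        ρ (t i + m) h w = ρt i m (θ i (splitE m (t i) h).1) (splitE m (t i) h).2 w)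
    (j : Hist W U T → ℝ≥0∞) (jt : X N → ℝ≥0∞)
    (hj : ∀ h : Hist W U T, j h = jt (θ N (hcast htN.symm h))) :
    ∃ Bt : ∀ i, (X (i + 1) → ℝ≥0∞) → X i → ℝ≥0∞,
      (∀ i (hi : i < N) (φt : X (i + 1) → ℝ≥0∞) (h : Hist W U (t i)),
        hBell ρ (t (i + 1) - t i) (t i)
          (fun h' => φt (θ (i + 1) (hcast (Nat.add_sub_cancel' (Nat.le_of_lt (hmono i hi))) h'))) h
          = Bt i φt (θ i h)) ∧
      ∃ Vt : ∀ i, X i → ℝ≥0∞,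
        Vt N = jt ∧
        (∀ i, i < N → Vt i = Bt i (Vt (i + 1))) ∧
        (∀ i (hi : i ≤ N) (h : Hist W U (t i)),
          Val ρ T j (T - t i) (t i) (Nat.add_sub_cancel' (hle i hi)) h = Vt i (θ i h)) := by
  let Bt : ∀ i, (X (i + 1) → ℝ≥0∞) → X i → ℝ≥0∞ := fun i φt =>
    if hi : t i ≤ t (i + 1) then
      reducedBell ρ (θ i) (fun h' => θ (i + 1) (hcast (Nat.add_sub_cancel' hi) h')) φt
    else 0
  have hBt : ∀ i (hi : i < N) (φt : X (i + 1) → ℝ≥0∞) (h : Hist W U (t i)),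
      hBell ρ (t (i + 1) - t i) (t i)
        (fun h' => φt (θ (i + 1) (hcast (Nat.add_sub_cancel' (Nat.le_of_lt (hmono i hi))) h'))) h
        = Bt i φt (θ i h) := fun i hi φt h => by
    simp only [Bt, dif_pos (hmono i hi).le]
    exact (reducedBell_apply ρ (θ i) _ (f i) (hred i hi) (ρt i) (hcomp i hi) φt h).symm
  let Vt : ∀ i, X i → ℝ≥0∞ := backwardRec N Bt jt
  have hVtN : Vt N = jt := backwardRec_self (Y := fun i => X i → ℝ≥0∞) N Bt jt
  have hVt : ∀ i < N, Vt i = Bt i (Vt (i + 1)) := fun i hi =>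
    backwardRec_of_lt (Y := fun i => X i → ℝ≥0∞) N Bt jt hi
  refine ⟨Bt, hBt, Vt, hVtN, hVt, fun i hi => ?_⟩
  induction hi using Nat.decreasingInduction with
  | self =>
    intro h
    subst htN
    rw [Val_congr ρ j (Nat.sub_self _) rfl, Val_zero, hj, hVtN]
    rfl
  | of_succ i hi ih =>
    intro h
    have hi' : t i ≤ t (i + 1) := (hmono i hi).le
    rw [Val_eq_hBell_Val ρ j hi' (hle (i + 1) hi), hVt i hi]
    simp only [ih]
    exact hBt i hi _ h

/-- multi-block factorization of value functions (discrete case). Given block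
times `0 = t_0 < t_1 < ⋯ < t_N = T`, compatible state reductions across each block
`[t_i, t_{i+1}]`, and a criterion factoring as `j = j̃ ∘ θ_{t_N}`, there exist reduced Bellman
operators `B̃_{t_{i+1}:t_i}` (characterized by the commutation property of Proposition DPB)
such that the reduced value functions `Ṽ_{t_N} = j̃`, `Ṽ_{t_i} = B̃_{t_{i+1}:t_i} Ṽ_{t_{i+1}}`
satisfy `V_{t_i} = Ṽ_{t_i} ∘ θ_{t_i}` for every `i = 0,…,N`. -/
theorem multi_block_factorization {W U : ℕ → Type}
    [∀ s, Fintype (W s)] [∀ s, Nonempty (W s)] [∀ s, Fintype (U s)] [∀ s, Nonempty (U s)]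
    (T N : ℕ) (hN : 0 < N)
    (ρ : ∀ s, Hist W U s → W (s + 1) → ℝ≥0∞)
    (hpmf : ∀ s (h : Hist W U s), ∑' w : W (s + 1), ρ s h w = 1)
    (t : ℕ → ℕ) (ht0 : t 0 = 0) (htN : t N = T)
    (hmono : ∀ i, i < N → t i < t (i + 1))
    (hle : ∀ i, i ≤ N → t i ≤ T)
    (X : ℕ → Type)
    (θ : ∀ i, Hist W U (t i) → X i)
    (f : ∀ i, X i → PartHistE W U (t i) (t (i + 1) - t i) → X (i + 1))
    (hred : ∀ i (hi : i < N) (h : Hist W U (t i + (t (i + 1) - t i))),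
      θ (i + 1) (hcast (Nat.add_sub_cancel' (Nat.le_of_lt (hmono i hi))) h)
        = f i (θ i (splitE (t (i + 1) - t i) (t i) h).1) (splitE (t (i + 1) - t i) (t i) h).2)
    (ρt : ∀ i m, X i → PartHistE W U (t i) m → W (t i + m + 1) → ℝ≥0∞)
    (hcomp : ∀ i, i < N → ∀ m, m < t (i + 1) - t i →
      ∀ (h : Hist W U (t i + m)) (w : W (t i + m + 1)),
        ρ (t i + m) h w = ρt i m (θ i (splitE m (t i) h).1) (splitE m (t i) h).2 w)
    (j : Hist W U T → ℝ≥0∞) (jt : X N → ℝ≥0∞)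
    (hj : ∀ h : Hist W U T, j h = jt (θ N (hcast htN.symm h))) :
    ∃ Bt : ∀ i, (X (i + 1) → ℝ≥0∞) → X i → ℝ≥0∞,
      (∀ i (hi : i < N) (φt : X (i + 1) → ℝ≥0∞) (h : Hist W U (t i)),
        hBell ρ (t (i + 1) - t i) (t i)
          (fun h' => φt (θ (i + 1) (hcast (Nat.add_sub_cancel' (Nat.le_of_lt (hmono i hi))) h'))) h
          = Bt i φt (θ i h)) ∧
      ∃ Vt : ∀ i, X i → ℝ≥0∞,
        Vt N = jt ∧
        (∀ i, i < N → Vt i = Bt i (Vt (i + 1))) ∧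
        (∀ i (hi : i ≤ N) (h : Hist W U (t i)),
          Val ρ T j (T - t i) (t i) (Nat.add_sub_cancel' (hle i hi)) h = Vt i (θ i h)) :=
  multi_block_factorization_general T N ρ t htN hmono hle X θ f hred ρt hcomp j jt hj
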